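/- Let G be a finite connected simple graph and let e be an edge of G whose edge-degree is minimum among all edges of G. Then the vertex of the edge-set graph Γ_G corresponding to the singleton subset {e} has degree equal to the minimum degree δ(Γ_G). -/

import Mathlib

open scoped Classical

/-- Two edges (as elements of `Sym2 V`) are *adjacent* if they are distinct and
share a common endpoint. -/
def EdgeAdj {V : Type*} (e f : Sym2 V) : Prop := e ≠ f ∧ ∃ v, v ∈ e ∧ v ∈ f

lemma EdgeAdj.symm {V : Type*} {e f : Sym2 V} (h : EdgeAdj e f) : EdgeAdj f e :=
  ⟨h.1.symm, h.2.elim fun v hv => ⟨v, hv.2, hv.1⟩⟩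

/-- The *edge-set graph* of a simple graph `G`: its vertices are the nonempty
(finite) subsets of the edge set of `G`, two distinct such subsets being adjacent
if and only if some edge in the first is adjacent to some edge in the second. -/
def edgeSetGraph {V : Type*} (G : SimpleGraph V) :
    SimpleGraph {S : Finset (Sym2 V) // ↑S ⊆ G.edgeSet ∧ S.Nonempty} where
  Adj A B := A ≠ B ∧ ∃ e ∈ A.1, ∃ f ∈ B.1, EdgeAdj e f
  symm := ⟨by
    rintro A B ⟨hAB, e, he, f, hf, hef⟩
    exact ⟨hAB.symm, f, hf, e, he, hef.symm⟩⟩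
  loopless := ⟨by rintro A ⟨h, -⟩; exact h rfl⟩

/-- The *edge-degree* of an edge `e` of `G`: the number of edges of `G` adjacent
to `e` (for `e = uv ∈ E(G)` this equals `d_G(u) + d_G(v) - 2`). -/
noncomputable def edgeDegree {V : Type*} [Fintype V] (G : SimpleGraph V) (e : Sym2 V) : ℕ :=
  (G.edgeFinset.filter (fun f => EdgeAdj e f)).card

/-!
A vertex `S` of `Γ_G` is adjacent exactly to the sets `T ≠ S` of edges meeting the set `N(S)` of
edges adjacent to some edge of `S`. With `m = |E(G)|`, there are `2^m - 2^(m - |N(S)|)` sets of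
edges meeting `N(S)`, so `deg S` is this number, minus one when `S` itself meets `N(S)`.
For `S = {e}` nothing is subtracted and `|N({e})| = d(e)`. Every other `S` has `|N(S)| ≥ d(e)`,
and when `S` meets `N(S)` in some `f`, then `N(S) ⊇ N({f}) ∪ {f}` gives `|N(S)| > d(e)`, which
more than pays for the subtracted one.
-/

open Finset

lemma card_filter_not_disjoint_powerset {α : Type*} {s N : Finset α} (hN : N ⊆ s) :
    #{T ∈ s.powerset | ¬Disjoint T N} = 2 ^ #s - 2 ^ (#s - #N) := by
  have hdisjoint : {T ∈ s.powerset | Disjoint T N} = (s \ N).powerset := by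
    ext T
    simp only [mem_filter, mem_powerset, subset_sdiff]
  have hsplit := card_filter_add_card_filter_not (s := s.powerset) (p := fun T => Disjoint T N)
  rw [hdisjoint, card_powerset, card_powerset, card_sdiff_of_subset hN] at hsplit
  omega

lemma two_pow_sub_two_pow_lt {m d k : ℕ} (hdk : d < k) (hkm : k ≤ m) :
    2 ^ m - 2 ^ (m - d) < 2 ^ m - 2 ^ (m - k) := by
  have hlt : 2 ^ (m - k) < 2 ^ (m - d) := Nat.pow_lt_pow_right (by norm_num) (by omega)
  have hle : 2 ^ (m - d) ≤ 2 ^ m := Nat.pow_le_pow_right (by norm_num) (Nat.sub_le _ _)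
  omega

namespace SimpleGraph

variable {V : Type*} [Fintype V] (G : SimpleGraph V)

noncomputable def adjEdgeFinset (S : Finset (Sym2 V)) : Finset (Sym2 V) :=
  {f ∈ G.edgeFinset | ∃ e ∈ S, EdgeAdj e f}

lemma adjEdgeFinset_subset_edgeFinset (S : Finset (Sym2 V)) :
    G.adjEdgeFinset S ⊆ G.edgeFinset :=
  filter_subset _ _

lemma adjEdgeFinset_mono {S T : Finset (Sym2 V)} (h : S ⊆ T) :
    G.adjEdgeFinset S ⊆ G.adjEdgeFinset T :=
  monotone_filter_right _ fun _ _ ⟨e, he, hef⟩ => ⟨e, h he, hef⟩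

lemma card_adjEdgeFinset_singleton (f : Sym2 V) :
    #(G.adjEdgeFinset {f}) = edgeDegree G f := by
  simp [adjEdgeFinset, edgeDegree]

lemma disjoint_singleton_adjEdgeFinset (f : Sym2 V) : Disjoint {f} (G.adjEdgeFinset {f}) := by
  simp [adjEdgeFinset, EdgeAdj]

variable {G}

lemma edgeDegree_le_card_adjEdgeFinset {S : Finset (Sym2 V)} {f : Sym2 V} (hf : f ∈ S) :
    edgeDegree G f ≤ #(G.adjEdgeFinset S) := by
  rw [← card_adjEdgeFinset_singleton]
  exact card_le_card (G.adjEdgeFinset_mono (singleton_subset_iff.2 hf))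

lemma edgeDegree_lt_card_adjEdgeFinset {S : Finset (Sym2 V)} {f : Sym2 V} (hfS : f ∈ S)
    (hfN : f ∈ G.adjEdgeFinset S) : edgeDegree G f < #(G.adjEdgeFinset S) := by
  have hsub : insert f (G.adjEdgeFinset {f}) ⊆ G.adjEdgeFinset S :=
    insert_subset hfN (G.adjEdgeFinset_mono (singleton_subset_iff.2 hfS))
  have hnotMem : f ∉ G.adjEdgeFinset {f} :=
    Finset.disjoint_left.1 (G.disjoint_singleton_adjEdgeFinset f) (mem_singleton_self f)
  simpa [card_insert_of_notMem hnotMem, card_adjEdgeFinset_singleton] using card_le_card hsub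

variable (G)

lemma image_val_neighborFinset_edgeSetGraph
    (A : {S : Finset (Sym2 V) // ↑S ⊆ G.edgeSet ∧ S.Nonempty}) :
    ((edgeSetGraph G).neighborFinset A).image Subtype.val =
      {T ∈ G.edgeFinset.powerset | ¬Disjoint T (G.adjEdgeFinset A.1)}.erase A.1 := by
  ext T
  simp only [mem_image, mem_neighborFinset, mem_erase, mem_filter, mem_powerset,
    not_disjoint_iff, adjEdgeFinset]
  constructor
  · rintro ⟨B, ⟨hne, e, he, f, hf, hef⟩, rfl⟩
    exact ⟨fun h => hne (Subtype.ext h.symm), fun g hg => mem_edgeFinset.2 (B.2.1 hg),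
      f, hf, mem_edgeFinset.2 (B.2.1 hf), e, he, hef⟩
  · rintro ⟨hne, hsub, f, hf, -, e, he, hef⟩
    exact ⟨⟨T, fun g hg => mem_edgeFinset.1 (hsub hg), ⟨f, hf⟩⟩,
      ⟨fun h => hne (congrArg Subtype.val h).symm, e, he, f, hf, hef⟩, rfl⟩

lemma degree_edgeSetGraph_of_disjoint
    {A : {S : Finset (Sym2 V) // ↑S ⊆ G.edgeSet ∧ S.Nonempty}}
    (hA : Disjoint A.1 (G.adjEdgeFinset A.1)) :
    (edgeSetGraph G).degree A =
      2 ^ #G.edgeFinset - 2 ^ (#G.edgeFinset - #(G.adjEdgeFinset A.1)) := by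
  have hnotMem : A.1 ∉ {T ∈ G.edgeFinset.powerset | ¬Disjoint T (G.adjEdgeFinset A.1)} :=
    fun h => (Finset.mem_filter.1 h).2 hA
  rw [← card_neighborFinset_eq_degree, ← card_image_of_injective _ Subtype.val_injective,
    image_val_neighborFinset_edgeSetGraph, erase_eq_of_notMem hnotMem]
  convert card_filter_not_disjoint_powerset (G.adjEdgeFinset_subset_edgeFinset A.1)

lemma degree_edgeSetGraph_of_not_disjoint
    {A : {S : Finset (Sym2 V) // ↑S ⊆ G.edgeSet ∧ S.Nonempty}}
    (hA : ¬Disjoint A.1 (G.adjEdgeFinset A.1)) :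
    (edgeSetGraph G).degree A =
      2 ^ #G.edgeFinset - 2 ^ (#G.edgeFinset - #(G.adjEdgeFinset A.1)) - 1 := by
  have hmem : A.1 ∈ {T ∈ G.edgeFinset.powerset | ¬Disjoint T (G.adjEdgeFinset A.1)} :=
    Finset.mem_filter.2 ⟨mem_powerset.2 fun g hg => mem_edgeFinset.2 (A.2.1 hg), hA⟩
  rw [← card_neighborFinset_eq_degree, ← card_image_of_injective _ Subtype.val_injective,
    image_val_neighborFinset_edgeSetGraph, card_erase_of_mem hmem]
  convert congrArg (· - 1)
    (card_filter_not_disjoint_powerset (G.adjEdgeFinset_subset_edgeFinset A.1))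

variable {G}

lemma degree_singleton_le_degree_edgeSetGraph {e : Sym2 V} (he : e ∈ G.edgeSet)
    (hmin : ∀ f ∈ G.edgeSet, edgeDegree G e ≤ edgeDegree G f)
    (B : {S : Finset (Sym2 V) // ↑S ⊆ G.edgeSet ∧ S.Nonempty}) :
    (edgeSetGraph G).degree ⟨{e}, by simpa using he, singleton_nonempty e⟩ ≤
      (edgeSetGraph G).degree B := by
  rw [degree_edgeSetGraph_of_disjoint G (G.disjoint_singleton_adjEdgeFinset e),
    card_adjEdgeFinset_singleton]
  by_cases hB : Disjoint B.1 (G.adjEdgeFinset B.1)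
  · obtain ⟨f, hf⟩ := B.2.2
    have hle : edgeDegree G e ≤ #(G.adjEdgeFinset B.1) :=
      (hmin f (B.2.1 hf)).trans (edgeDegree_le_card_adjEdgeFinset hf)
    rw [degree_edgeSetGraph_of_disjoint G hB]
    exact Nat.sub_le_sub_left (Nat.pow_le_pow_right (by norm_num) (Nat.sub_le_sub_left hle _)) _
  · obtain ⟨f, hfB, hfN⟩ := not_disjoint_iff.1 hB
    have hlt : edgeDegree G e < #(G.adjEdgeFinset B.1) :=
      (hmin f (B.2.1 hfB)).trans_lt (edgeDegree_lt_card_adjEdgeFinset hfB hfN)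
    rw [degree_edgeSetGraph_of_not_disjoint G hB]
    have := two_pow_sub_two_pow_lt hlt (card_le_card (G.adjEdgeFinset_subset_edgeFinset B.1))
    omega

end SimpleGraph

/-- If `e` is an edge of a finite connected simple graph `G` whose edge-degree is
minimum among all edges of `G`, then the vertex of the edge-set graph `Γ_G`
corresponding to the singleton `{e}` has degree `δ(Γ_G)`. -/
theorem stmt_14 {V : Type*} [Fintype V] (G : SimpleGraph V)
    (e : Sym2 V) (he : e ∈ G.edgeSet)
    (hmin : ∀ f ∈ G.edgeSet, edgeDegree G e ≤ edgeDegree G f) :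
    (edgeSetGraph G).degree ⟨{e}, by simpa using he, Finset.singleton_nonempty e⟩ =
      (edgeSetGraph G).minDegree := by
  have : Nonempty {S : Finset (Sym2 V) // ↑S ⊆ G.edgeSet ∧ S.Nonempty} :=
    ⟨⟨{e}, by simpa using he, Finset.singleton_nonempty e⟩⟩
  exact le_antisymm
    ((edgeSetGraph G).le_minDegree_of_forall_le_degree _
      (SimpleGraph.degree_singleton_le_degree_edgeSetGraph he hmin))
    ((edgeSetGraph G).minDegree_le_degree _)
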